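/- arXiv:1911.04334 — 2 statements merged into one kernel-verified Lean document; each statement's English description precedes it below -/
import Mathlib

section
/- Let $(\alpha_k)$ be a sequence of positive reals such that $\frac{\sum_{i=0}^k \alpha_i^2}{(\sum_{i=0}^k \alpha_i)^2} \le \frac{N}{k^\gamma}$ for all $k\ge 1$, for some $N>0$ and $\gamma>1/2$. Let $(X_k)$ be i.i.d. real random variables with mean $\mu$ and $\mathbb{E}X_0^4 < +\infty$. Then almost surely $\frac{\sum_{i=0}^k \alpha_i X_i}{\sum_{i=0}^k \alpha_i} \to \mu$ as $k\to\infty$. -/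
open MeasureTheory ProbabilityTheory Finset Filter

/-! With `S_k = ∑_{i ≤ k} α_i (X_i - μ)` and `A_k = ∑_{i ≤ k} α_i`, independence and centring
kill every cross moment containing a first power, so `E S_k⁴ ≤ (E Y⁴ + 3 (E Y²)²) (∑ α_i²)²` for
`Y = X_0 - μ`. The hypothesis on the weights turns this into `E (S_k / A_k)⁴ = O(k^(-2γ))`, hence by
Markov's inequality `P(|S_k / A_k| ≥ ε)` is summable since `2γ > 1`, and Borel–Cantelli gives
`S_k / A_k → 0` almost surely. -/

section

variable {Ω : Type*} [MeasurableSpace Ω] {P : Measure Ω}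

theorem MeasureTheory.MemLp.integrable_pow_of_le [IsFiniteMeasure P] {f : Ω → ℝ} {n m : ℕ}
    (hf : MemLp f n P) (hm : m ≤ n) : Integrable (fun ω => f ω ^ m) P := by
  have h := (hf.mono_exponent (by exact_mod_cast hm)).integrable_norm_pow'
  simp only [← norm_pow] at h
  exact (integrable_norm_iff (hf.aestronglyMeasurable.pow m)).1 h

theorem ProbabilityTheory.IndepFun.integral_add_pow [IsFiniteMeasure P] {T Z : Ω → ℝ}
    {n : ℕ} (h : IndepFun T Z P) (hT : MemLp T n P) (hZ : MemLp Z n P) :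
    ∫ ω, (T ω + Z ω) ^ n ∂P =
      ∑ m ∈ range (n + 1), (∫ ω, T ω ^ m ∂P) * (∫ ω, Z ω ^ (n - m) ∂P) * n.choose m := by
  have hpow (m : ℕ) : IndepFun (fun ω => T ω ^ m) (fun ω => Z ω ^ (n - m)) P :=
    h.comp (measurable_id.pow_const m) (measurable_id.pow_const (n - m))
  simp_rw [add_pow]
  rw [integral_finsetSum]
  · refine sum_congr rfl fun m hm => ?_
    rw [integral_mul_const, (hpow m).integral_fun_mul_eq_mul_integral
      (hT.aestronglyMeasurable.pow m) (hZ.aestronglyMeasurable.pow (n - m))]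
  · intro m hm
    have hmn : m ≤ n := Nat.lt_succ_iff.1 (mem_range.1 hm)
    exact ((hpow m).integrable_mul (hT.integrable_pow_of_le hmn)
      (hZ.integrable_pow_of_le (Nat.sub_le n m))).mul_const _

theorem ProbabilityTheory.IndepFun.integral_add_sq [IsProbabilityMeasure P] {T Z : Ω → ℝ}
    (h : IndepFun T Z P) (hT : MemLp T 2 P) (hZ : MemLp Z 2 P) (hT0 : ∫ ω, T ω ∂P = 0)
    (hZ0 : ∫ ω, Z ω ∂P = 0) :
    ∫ ω, (T ω + Z ω) ^ 2 ∂P = ∫ ω, T ω ^ 2 ∂P + ∫ ω, Z ω ^ 2 ∂P := by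
  rw [h.integral_add_pow (by exact_mod_cast hT) (by exact_mod_cast hZ)]
  simp only [Nat.reduceAdd, sum_range_succ, range_one, sum_singleton, pow_zero, integral_const,
    probReal_univ, smul_eq_mul, mul_one, tsub_zero, one_mul, Nat.choose_zero_right, Nat.cast_one,
    pow_one, hT0, Nat.add_one_sub_one, hZ0, mul_zero, Nat.choose_succ_self_right, Nat.cast_ofNat,
    zero_mul, add_zero, tsub_self, Nat.choose_self]
  ring

theorem ProbabilityTheory.IndepFun.integral_add_pow_four [IsProbabilityMeasure P]
    {T Z : Ω → ℝ} (h : IndepFun T Z P) (hT : MemLp T 4 P) (hZ : MemLp Z 4 P) (hT0 : ∫ ω, T ω ∂P = 0)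
    (hZ0 : ∫ ω, Z ω ∂P = 0) :
    ∫ ω, (T ω + Z ω) ^ 4 ∂P =
      ∫ ω, T ω ^ 4 ∂P + 6 * (∫ ω, T ω ^ 2 ∂P) * (∫ ω, Z ω ^ 2 ∂P) + ∫ ω, Z ω ^ 4 ∂P := by
  rw [h.integral_add_pow (by exact_mod_cast hT) (by exact_mod_cast hZ)]
  simp only [Nat.reduceAdd, sum_range_succ, range_one, sum_singleton, pow_zero, integral_const,
    probReal_univ, smul_eq_mul, mul_one, tsub_zero, one_mul, Nat.choose, Nat.cast_one, pow_one,
    hT0, Nat.add_one_sub_one, zero_mul, add_zero, Nat.cast_ofNat, Nat.reduceSub, hZ0, mul_zero,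
    tsub_self]
  ring

section IndependentSums

variable {f : ℕ → Ω → ℝ}

theorem ProbabilityTheory.iIndepFun.indepFun_fun_sum_range_succ (hindep : iIndepFun f P)
    (hf : ∀ i, AEMeasurable (f i) P) (n : ℕ) :
    IndepFun (fun ω => ∑ i ∈ range n, f i ω) (f n) P := by
  simpa only [← Finset.sum_apply] using hindep.indepFun_sum_range_succ₀ hf n

theorem MeasureTheory.integral_finsetSum_eq_zero (hf : ∀ i, Integrable (f i) P)
    (h0 : ∀ i, ∫ ω, f i ω ∂P = 0) (s : Finset ℕ) : ∫ ω, ∑ i ∈ s, f i ω ∂P = 0 := by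
  rw [integral_finsetSum _ fun i _ => hf i]
  exact sum_eq_zero fun i _ => h0 i

theorem ProbabilityTheory.iIndepFun.integral_sum_sq [IsProbabilityMeasure P]
    (hindep : iIndepFun f P) (hf : ∀ i, MemLp (f i) 2 P) (h0 : ∀ i, ∫ ω, f i ω ∂P = 0) (n : ℕ) :
    ∫ ω, (∑ i ∈ range n, f i ω) ^ 2 ∂P = ∑ i ∈ range n, ∫ ω, f i ω ^ 2 ∂P := by
  induction n with
  | zero => simp
  | succ n ih =>
    simp only [sum_range_succ]
    have hind := hindep.indepFun_fun_sum_range_succ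
      (fun i => (hf i).aestronglyMeasurable.aemeasurable) n
    rw [hind.integral_add_sq (memLp_finsetSum _ fun i _ => hf i) (hf n)
      (integral_finsetSum_eq_zero (fun i => (hf i).integrable one_le_two) h0 _) (h0 n), ih]

theorem ProbabilityTheory.iIndepFun.integral_sum_pow_four_le [IsProbabilityMeasure P]
    (hindep : iIndepFun f P) (hf : ∀ i, MemLp (f i) 4 P) (h0 : ∀ i, ∫ ω, f i ω ∂P = 0) (n : ℕ) :
    ∫ ω, (∑ i ∈ range n, f i ω) ^ 4 ∂P ≤
      ∑ i ∈ range n, ∫ ω, f i ω ^ 4 ∂P + 3 * (∑ i ∈ range n, ∫ ω, f i ω ^ 2 ∂P) ^ 2 := by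
  have hf2 (i : ℕ) : MemLp (f i) 2 P := (hf i).mono_exponent (by norm_num)
  induction n with
  | zero => simp
  | succ n ih =>
    simp only [sum_range_succ]
    have hind := hindep.indepFun_fun_sum_range_succ
      (fun i => (hf i).aestronglyMeasurable.aemeasurable) n
    rw [hind.integral_add_pow_four (memLp_finsetSum _ fun i _ => hf i) (hf n)
      (integral_finsetSum_eq_zero (fun i => (hf i).integrable (by norm_num)) h0 _) (h0 n),
      hindep.integral_sum_sq hf2 h0]
    have hn : 0 ≤ ∫ ω, f n ω ^ 2 ∂P := integral_nonneg fun ω => sq_nonneg _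
    have hsum : 0 ≤ ∑ i ∈ range n, ∫ ω, f i ω ^ 2 ∂P :=
      sum_nonneg fun i _ => integral_nonneg fun ω => sq_nonneg (f i ω)
    nlinarith

end IndependentSums

theorem ProbabilityTheory.iIndepFun.integral_weighted_sum_pow_four_le
    [IsProbabilityMeasure P] {Y : ℕ → Ω → ℝ} (hindep : iIndepFun Y P)
    (hident : ∀ i, IdentDistrib (Y i) (Y 0) P P) (hY : MemLp (Y 0) 4 P)
    (h0 : ∫ ω, Y 0 ω ∂P = 0) (α : ℕ → ℝ) (n : ℕ) :
    ∫ ω, (∑ i ∈ range n, α i * Y i ω) ^ 4 ∂P ≤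
      (∫ ω, Y 0 ω ^ 4 ∂P + 3 * (∫ ω, Y 0 ω ^ 2 ∂P) ^ 2) * (∑ i ∈ range n, α i ^ 2) ^ 2 := by
  have hmoment (i j : ℕ) : ∫ ω, (α i * Y i ω) ^ j ∂P = α i ^ j * ∫ ω, Y 0 ω ^ j ∂P := by
    simp_rw [mul_pow]
    rw [integral_const_mul]
    exact congrArg _ ((hident i).comp (measurable_id.pow_const j)).integral_eq
  have hweighted := hindep.comp (fun i x => α i * x) fun i => measurable_const_mul (α i)
  have hbound := hweighted.integral_sum_pow_four_le
    (fun i => ((hident i).symm.memLp_snd hY).const_mul (α i))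
    (fun i => show ∫ ω, α i * Y i ω ∂P = 0 by
      rw [integral_const_mul, (hident i).integral_eq, h0, mul_zero]) n
  simp only [Function.comp_apply, hmoment, ← sum_mul] at hbound
  have hm4 : 0 ≤ ∫ ω, Y 0 ω ^ 4 ∂P := integral_nonneg fun ω => by positivity
  have hα4 : ∑ i ∈ range n, α i ^ 4 ≤ (∑ i ∈ range n, α i ^ 2) ^ 2 := by
    simpa only [← pow_mul] using sum_sq_le_sq_sum_of_nonneg fun i _ => sq_nonneg (α i)
  nlinarith [mul_le_mul_of_nonneg_right hα4 hm4]

theorem MeasureTheory.measureReal_ge_le_integral_abs_pow_div [IsFiniteMeasure P] {Y : Ω → ℝ}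
    {n : ℕ} (hY : Integrable (fun ω => |Y ω| ^ n) P) {ε : ℝ} (hε : 0 < ε) :
    P.real {ω | ε ≤ |Y ω|} ≤ (∫ ω, |Y ω| ^ n ∂P) / ε ^ n := by
  rw [le_div_iff₀ (pow_pos hε n), mul_comm]
  calc ε ^ n * P.real {ω | ε ≤ |Y ω|}
      ≤ ε ^ n * P.real {ω | ε ^ n ≤ |Y ω| ^ n} :=
        mul_le_mul_of_nonneg_left
          (measureReal_mono fun ω (hω : ε ≤ |Y ω|) => pow_le_pow_left₀ hε.le hω n) (by positivity)
    _ ≤ ∫ ω, |Y ω| ^ n ∂P :=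
        mul_meas_ge_le_integral_of_nonneg (ae_of_all _ fun ω => by positivity) hY _

theorem MeasureTheory.ae_tendsto_zero_of_summable_measureReal [IsFiniteMeasure P]
    {u : ℕ → Ω → ℝ} (h : ∀ ε > 0, Summable fun k => P.real {ω | ε ≤ |u k ω|}) :
    ∀ᵐ ω ∂P, Tendsto (fun k => u k ω) atTop (nhds 0) := by
  have hevent (n : ℕ) : ∀ᵐ ω ∂P, ∀ᶠ k in atTop, |u k ω| < 1 / (n + 1) := by
    have hsum := h (1 / (n + 1)) (by positivity)
    have hfin : ∑' k, P {ω | 1 / (n + 1) ≤ |u k ω|} ≠ ⊤ := by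
      rw [← tsum_congr fun k => ofReal_measureReal (μ := P) (s := {ω | 1 / (n + 1) ≤ |u k ω|}),
        ← ENNReal.ofReal_tsum_of_nonneg (fun k => measureReal_nonneg) hsum]
      exact ENNReal.ofReal_ne_top
    filter_upwards [ae_eventually_notMem hfin] with ω hω
    simpa using hω
  filter_upwards [ae_all_iff.2 hevent] with ω hω
  refine Metric.tendsto_nhds.2 fun ε hε => ?_
  obtain ⟨n, hn⟩ := exists_nat_one_div_lt hε
  filter_upwards [hω n] with k hk
  rw [Real.dist_0_eq_abs]
  exact hk.trans hn

theorem ProbabilityTheory.iIndepFun.ae_tendsto_weighted_mean_zero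
    [IsProbabilityMeasure P] {Y : ℕ → Ω → ℝ} (hindep : iIndepFun Y P)
    (hident : ∀ i, IdentDistrib (Y i) (Y 0) P P) (hY : MemLp (Y 0) 4 P)
    (h0 : ∫ ω, Y 0 ω ∂P = 0) {α : ℕ → ℝ} {N γ : ℝ} (hγ : 1 / 2 < γ)
    (hratio : ∀ k : ℕ, 1 ≤ k →
      (∑ i ∈ range (k + 1), α i ^ 2) / (∑ i ∈ range (k + 1), α i) ^ 2 ≤ N / (k : ℝ) ^ γ) :
    ∀ᵐ ω ∂P, Tendsto (fun k => (∑ i ∈ range (k + 1), α i * Y i ω) / ∑ i ∈ range (k + 1), α i)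
      atTop (nhds 0) := by
  set A : ℕ → ℝ := fun k => ∑ i ∈ range (k + 1), α i
  set S : ℕ → Ω → ℝ := fun k ω => ∑ i ∈ range (k + 1), α i * Y i ω
  set C := ∫ ω, Y 0 ω ^ 4 ∂P + 3 * (∫ ω, Y 0 ω ^ 2 ∂P) ^ 2
  have hmoment (k : ℕ) (hk : 1 ≤ k) :
      ∫ ω, |S k ω / A k| ^ 4 ∂P ≤ C * N ^ 2 * ((k : ℝ) ^ (2 * γ))⁻¹ := by
    have hk' : (0 : ℝ) < k := by exact_mod_cast hk
    calc ∫ ω, |S k ω / A k| ^ 4 ∂P = (∫ ω, S k ω ^ 4 ∂P) / A k ^ 4 := by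
          simp_rw [Even.pow_abs ⟨2, rfl⟩, div_pow, integral_div]
      _ ≤ C * ((∑ i ∈ range (k + 1), α i ^ 2) / A k ^ 2) ^ 2 := by
          rw [div_pow, ← pow_mul, mul_div_assoc']
          exact div_le_div_of_nonneg_right
            (hindep.integral_weighted_sum_pow_four_le hident hY h0 α (k + 1)) (by positivity)
      _ ≤ C * (N / (k : ℝ) ^ γ) ^ 2 :=
          mul_le_mul_of_nonneg_left (pow_le_pow_left₀ (by positivity) (hratio k hk) 2)
            (by positivity)
      _ = C * N ^ 2 * ((k : ℝ) ^ (2 * γ))⁻¹ := by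
          rw [mul_comm 2 γ, Real.rpow_mul hk'.le, Real.rpow_two]
          ring
  refine ae_tendsto_zero_of_summable_measureReal fun ε hε => ?_
  refine Summable.of_norm_bounded_eventually_nat
    (((Real.summable_nat_rpow_inv.2 (show 1 < 2 * γ by linarith)).mul_left (C * N ^ 2)).div_const
      (ε ^ 4)) ?_
  filter_upwards [eventually_ge_atTop 1] with k hk
  have hSk : MemLp (S k) 4 P := memLp_finsetSum (range (k + 1)) fun i _ =>
    ((hident i).symm.memLp_snd hY).const_mul (α i)
  replace hSk : MemLp (fun ω => S k ω / A k) 4 P := by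
    simpa only [div_eq_mul_inv] using hSk.mul_const (A k)⁻¹
  rw [Real.norm_of_nonneg measureReal_nonneg]
  exact (measureReal_ge_le_integral_abs_pow_div hSk.integrable_norm_pow' hε).trans
    (div_le_div_of_nonneg_right (hmoment k hk) (by positivity))

end

theorem stmt_10_general {Ω : Type*} [MeasurableSpace Ω] (P : Measure Ω) [IsProbabilityMeasure P]
    (α : ℕ → ℝ) (hα : ∀ i, 0 < α i) (N γ : ℝ) (hγ : 1 / 2 < γ)
    (hratio : ∀ k : ℕ, 1 ≤ k →
      (∑ i ∈ range (k + 1), (α i) ^ 2) / (∑ i ∈ range (k + 1), α i) ^ 2 ≤ N / (k : ℝ) ^ γ)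
    (X : ℕ → Ω → ℝ) (hmeas : ∀ i, Measurable (X i))
    (hindep : iIndepFun X P)
    (hident : ∀ i, IdentDistrib (X i) (X 0) P P)
    (μ : ℝ) (hmean : ∫ ω, X 0 ω ∂P = μ)
    (hm4 : Integrable (fun ω => (X 0 ω) ^ 4) P) :
    ∀ᵐ ω ∂P, Tendsto
      (fun k => (∑ i ∈ range (k + 1), α i * X i ω) / (∑ i ∈ range (k + 1), α i))
      atTop (nhds μ) := by
  have hX0 : MemLp (X 0) 4 P := by
    refine (integrable_norm_rpow_iff (hmeas 0).aestronglyMeasurable (by norm_num)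
      (by norm_num)).1 ?_
    simpa [Even.pow_abs ⟨2, rfl⟩] using hm4
  have hcentered : ∫ ω, X 0 ω - μ ∂P = 0 := by
    rw [integral_sub (hX0.integrable (by norm_num)) (integrable_const μ), hmean]
    simp
  have hY := hindep.comp (fun _ x => x - μ) fun _ => measurable_sub_const μ
  have hconv := hY.ae_tendsto_weighted_mean_zero (fun i => (hident i).comp (measurable_sub_const μ))
    (hX0.sub (memLp_const μ)) hcentered hγ hratio
  filter_upwards [hconv] with ω hω
  have hsplit (k : ℕ) :
      μ + (∑ i ∈ range (k + 1), α i * (X i ω - μ)) / ∑ i ∈ range (k + 1), α i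
        = (∑ i ∈ range (k + 1), α i * X i ω) / ∑ i ∈ range (k + 1), α i := by
    have hA : ∑ i ∈ range (k + 1), α i ≠ 0 :=
      (sum_pos (fun i _ => hα i) nonempty_range_add_one).ne'
    rw [eq_div_iff hA, add_mul, div_mul_cancel₀ _ hA]
    simp only [mul_sub, sum_sub_distrib, ← sum_mul]
    ring
  simpa only [Function.comp_apply, hsplit, add_zero] using hω.const_add μ

theorem stmt_10 {Ω : Type*} [MeasurableSpace Ω] (P : Measure Ω) [IsProbabilityMeasure P]
    (α : ℕ → ℝ) (hα : ∀ i, 0 < α i) (N γ : ℝ) (hN : 0 < N) (hγ : 1 / 2 < γ)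
    (hratio : ∀ k : ℕ, 1 ≤ k →
      (∑ i ∈ range (k + 1), (α i) ^ 2) / (∑ i ∈ range (k + 1), α i) ^ 2 ≤ N / (k : ℝ) ^ γ)
    (X : ℕ → Ω → ℝ) (hmeas : ∀ i, Measurable (X i))
    (hindep : iIndepFun X P)
    (hident : ∀ i, IdentDistrib (X i) (X 0) P P)
    (μ : ℝ) (hmean : ∫ ω, X 0 ω ∂P = μ)
    (hm4 : Integrable (fun ω => (X 0 ω) ^ 4) P) :
    ∀ᵐ ω ∂P, Tendsto
      (fun k => (∑ i ∈ range (k + 1), α i * X i ω) / (∑ i ∈ range (k + 1), α i))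
      atTop (nhds μ) :=
  stmt_10_general P α hα N γ hγ hratio X hmeas hindep hident μ hmean hm4
end

section
/- Let $(V_k)_{k\ge 0}$ be a sequence of nonnegative random variables adapted to a filtration $(\mathcal{F}_k)$, and let $(\xi_k)$, $(\zeta_k)$ be nonnegative random variables with $\mathbb{E}_{\mathcal{F}_k} V_{k+1} \le V_k - \zeta_k + \xi_k$ for all $k$ and $\sum_{k}\mathbb{E}\xi_k < +\infty$. Then almost surely $(V_k)$ converges and $\sum_k \zeta_k < +\infty$. -/
/-!
Conditioning `ξ k` on `ℱ k` and dropping `ζ` gives `𝔼[V (k+1) | ℱ k] ≤ V k + ξ' k` with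
`ξ' k = 𝔼[ξ k | ℱ k]` adapted, so `V n - ∑_{k<n} ξ' k` is a supermartingale. Integrating the
recursion and telescoping bounds `𝔼 V n + ∑_{k<n} 𝔼 ζ k` by `𝔼 V 0 + ∑ 𝔼 ξ k`; hence the
supermartingale is bounded in `L¹` and converges a.s. by Doob's theorem, while `∑ ξ' k` and
`∑ ζ k` are nonnegative series with summable expectations and so converge a.s.
-/

open MeasureTheory Filter Finset
open scoped ENNReal NNReal Topology

section Deterministic

variable {a x z : ℕ → ℝ}

lemma add_sum_range_le_of_succ_add_le (h : ∀ k, a (k + 1) + z k ≤ a k + x k) (n : ℕ) :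
    a n + ∑ k ∈ range n, z k ≤ a 0 + ∑ k ∈ range n, x k := by
  induction n with
  | zero => simp
  | succ n ih =>
    rw [sum_range_succ, sum_range_succ]
    linarith [h n]

lemma summable_of_succ_add_le (ha : ∀ k, 0 ≤ a k) (hz : ∀ k, 0 ≤ z k) (hx : ∀ k, 0 ≤ x k)
    (hxs : Summable x) (h : ∀ k, a (k + 1) + z k ≤ a k + x k) : Summable z :=
  summable_of_sum_range_le (c := a 0 + ∑' k, x k) hz fun n => by
    linarith [add_sum_range_le_of_succ_add_le h n, ha n,
      hxs.sum_le_tsum (range n) fun k _ => hx k]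

end Deterministic

section Probability

variable {Ω : Type*} {m0 : MeasurableSpace Ω} {μ : Measure Ω}

lemma eLpNorm_one_eq_ofReal_integral {f : Ω → ℝ} (hf : 0 ≤ᵐ[μ] f) (hfi : Integrable f μ) :
    eLpNorm f 1 μ = ENNReal.ofReal (∫ ω, f ω ∂μ) := by
  rw [eLpNorm_one_eq_lintegral_enorm, ← ofReal_integral_norm_eq_lintegral_enorm hfi]
  exact congrArg _ (integral_congr_ae (hf.mono fun ω hω => Real.norm_of_nonneg hω))

lemma ae_summable_of_summable_integral {ι : Type*} [Countable ι] {g : ι → Ω → ℝ}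
    (hg : ∀ i, 0 ≤ᵐ[μ] g i) (hgi : ∀ i, Integrable (g i) μ)
    (hsum : Summable fun i => ∫ ω, g i ω ∂μ) :
    ∀ᵐ ω ∂μ, Summable fun i => g i ω := by
  have hnorm := summable_norm_of_tsum_eLpNorm_ne_top le_rfl (fun i => (hgi i).1) <| by
    simpa only [eLpNorm_one_eq_ofReal_integral (hg _) (hgi _)] using hsum.tsum_ofReal_ne_top
  filter_upwards [hnorm, ae_all_iff.2 hg] with ω hω hpos
  exact hω.congr fun i => Real.norm_of_nonneg (hpos i)

lemma eLpNorm_one_sub_le_ofReal {f g : Ω → ℝ} (hf : 0 ≤ᵐ[μ] f) (hg : 0 ≤ᵐ[μ] g)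
    (hfi : Integrable f μ) (hgi : Integrable g μ) :
    eLpNorm (f - g) 1 μ ≤ ENNReal.ofReal (∫ ω, f ω ∂μ + ∫ ω, g ω ∂μ) := by
  rw [ENNReal.ofReal_add (integral_nonneg_of_ae hf) (integral_nonneg_of_ae hg),
    ← eLpNorm_one_eq_ofReal_integral hf hfi, ← eLpNorm_one_eq_ofReal_integral hg hgi]
  exact eLpNorm_sub_le hfi.1 hgi.1 le_rfl

section CondExp

variable {m : MeasurableSpace Ω}

lemma integral_le_of_condExp_le (hm : m ≤ m0) [SigmaFinite (μ.trim hm)] {f g : Ω → ℝ}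
    (hg : Integrable g μ) (h : μ[f | m] ≤ᵐ[μ] g) : ∫ ω, f ω ∂μ ≤ ∫ ω, g ω ∂μ :=
  calc ∫ ω, f ω ∂μ = ∫ ω, (μ[f | m]) ω ∂μ := (integral_condExp hm).symm
    _ ≤ ∫ ω, g ω ∂μ := integral_mono_ae integrable_condExp hg h

lemma condExp_le_add_condExp (hm : m ≤ m0) [SigmaFinite (μ.trim hm)] {f g e : Ω → ℝ}
    (hf : StronglyMeasurable[m] f) (hfi : Integrable f μ) (hei : Integrable e μ)
    (h : μ[g | m] ≤ᵐ[μ] f + e) : μ[g | m] ≤ᵐ[μ] f + μ[e | m] := by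
  have hmono := condExp_mono (m := m) integrable_condExp (hfi.add hei) h
  rw [condExp_of_stronglyMeasurable hm stronglyMeasurable_condExp integrable_condExp] at hmono
  filter_upwards [hmono, condExp_add hfi hei m] with ω h1 h2
  rwa [h2, Pi.add_apply, condExp_of_stronglyMeasurable hm hf hfi] at h1

end CondExp

section Martingale

variable [IsFiniteMeasure μ] {ℱ : Filtration ℕ m0}

lemma MeasureTheory.Supermartingale.exists_ae_tendsto_of_bdd {f : ℕ → Ω → ℝ} {R : ℝ≥0}
    (hf : Supermartingale f ℱ μ) (hbdd : ∀ n, eLpNorm (f n) 1 μ ≤ R) :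
    ∀ᵐ ω ∂μ, ∃ c, Tendsto (fun n => f n ω) atTop (𝓝 c) := by
  have hneg := hf.neg.exists_ae_tendsto_of_bdd (R := R) fun n => by
    simpa only [Pi.neg_apply, eLpNorm_neg] using hbdd n
  filter_upwards [hneg] with ω ⟨c, hc⟩
  exact ⟨-c, by simpa using hc.neg⟩

lemma supermartingale_sub_sum_range {V ξ : ℕ → Ω → ℝ} (hV : StronglyAdapted ℱ V)
    (hVi : ∀ n, Integrable (V n) μ) (hξ : StronglyAdapted ℱ ξ) (hξi : ∀ n, Integrable (ξ n) μ)
    (hrec : ∀ k, μ[V (k + 1) | ℱ k] ≤ᵐ[μ] V k + ξ k) :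
    Supermartingale (fun n => V n - ∑ k ∈ range n, ξ k) ℱ μ := by
  have hSi : ∀ n, Integrable (∑ k ∈ range n, ξ k) μ := fun n =>
    integrable_finsetSum' _ fun k _ => hξi k
  refine supermartingale_nat (fun n => (hV n).sub <| Finset.stronglyMeasurable_sum _ fun k hk =>
      (hξ k).mono (ℱ.mono (mem_range.1 hk).le)) (fun n => (hVi n).sub (hSi n)) fun k => ?_
  -- the compensator up to time `k + 1` is already known at time `k`
  have hS : StronglyMeasurable[ℱ k] (∑ j ∈ range (k + 1), ξ j) :=
    Finset.stronglyMeasurable_sum _ fun j hj =>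
      (hξ j).mono (ℱ.mono (Nat.lt_succ_iff.1 (mem_range.1 hj)))
  filter_upwards [condExp_sub (hVi (k + 1)) (hSi (k + 1)) (ℱ k), hrec k] with ω h1 h2
  rw [h1, Pi.sub_apply, condExp_of_stronglyMeasurable (ℱ.le k) hS (hSi (k + 1))]
  simp only [Pi.sub_apply, Pi.add_apply, sum_range_succ, Finset.sum_apply] at h2 ⊢
  linarith

lemma ae_exists_tendsto_of_condExp_le_add {V ξ : ℕ → Ω → ℝ} (hVpos : ∀ n, 0 ≤ᵐ[μ] V n)
    (hV : StronglyAdapted ℱ V) (hVi : ∀ n, Integrable (V n) μ) (hξpos : ∀ n, 0 ≤ᵐ[μ] ξ n)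
    (hξ : StronglyAdapted ℱ ξ) (hξi : ∀ n, Integrable (ξ n) μ)
    (hrec : ∀ k, μ[V (k + 1) | ℱ k] ≤ᵐ[μ] V k + ξ k) (hsum : Summable fun k => ∫ ω, ξ k ω ∂μ) :
    ∀ᵐ ω ∂μ, ∃ l, Tendsto (fun n => V n ω) atTop (𝓝 l) := by
  have hSi : ∀ n, Integrable (∑ k ∈ range n, ξ k) μ := fun n =>
    integrable_finsetSum' _ fun k _ => hξi k
  have hSpos : ∀ n, 0 ≤ᵐ[μ] ∑ k ∈ range n, ξ k := fun n => by
    filter_upwards [ae_all_iff.2 hξpos] with ω hω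
    simpa only [Pi.zero_apply, Finset.sum_apply] using sum_nonneg fun k _ => hω k
  have hX : ∀ n, ∑ k ∈ range n, ∫ ω, ξ k ω ∂μ ≤ ∑' k, ∫ ω, ξ k ω ∂μ := fun n =>
    hsum.sum_le_tsum _ fun k _ => integral_nonneg_of_ae (hξpos k)
  have hI : ∀ n, ∫ ω, V n ω ∂μ ≤ ∫ ω, V 0 ω ∂μ + ∑ k ∈ range n, ∫ ω, ξ k ω ∂μ := by
    simpa using add_sum_range_le_of_succ_add_le (z := 0) fun k => by
      simpa [integral_add (hVi k) (hξi k)] using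
        integral_le_of_condExp_le (ℱ.le k) ((hVi k).add (hξi k)) (hrec k)
  have hbdd : ∀ n, eLpNorm (V n - ∑ k ∈ range n, ξ k) 1 μ ≤
      (∫ ω, V 0 ω ∂μ + 2 * ∑' k, ∫ ω, ξ k ω ∂μ).toNNReal := fun n => by
    refine (eLpNorm_one_sub_le_ofReal (hVpos n) (hSpos n) (hVi n) (hSi n)).trans ?_
    refine ENNReal.ofReal_le_ofReal ?_
    simp only [Finset.sum_apply]
    rw [integral_finsetSum _ fun k _ => hξi k]
    linarith [hI n, hX n]
  have hW := (supermartingale_sub_sum_range hV hVi hξ hξi hrec).exists_ae_tendsto_of_bdd hbdd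
  filter_upwards [hW, ae_summable_of_summable_integral hξpos hξi hsum] with ω ⟨c, hc⟩ hω
  refine ⟨c + ∑' k, ξ k ω, (hc.add hω.hasSum.tendsto_sum_nat).congr fun n => ?_⟩
  simp [Finset.sum_apply]

end Martingale

end Probability

theorem stmt_19 {Ω : Type*} {m0 : MeasurableSpace Ω} (μ : Measure Ω) [IsProbabilityMeasure μ]
    (ℱ : Filtration ℕ m0) (V ξ ζ : ℕ → Ω → ℝ)
    (hVpos : ∀ k, 0 ≤ᵐ[μ] V k) (hξpos : ∀ k, 0 ≤ᵐ[μ] ξ k) (hζpos : ∀ k, 0 ≤ᵐ[μ] ζ k)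
    (hadapt : Adapted ℱ V)
    (hVint : ∀ k, Integrable (V k) μ) (hξint : ∀ k, Integrable (ξ k) μ)
    (hζint : ∀ k, Integrable (ζ k) μ)
    (hrec : ∀ k, μ[V (k + 1) | ℱ k] ≤ᵐ[μ] fun ω => V k ω - ζ k ω + ξ k ω)
    (hsum : Summable fun k => ∫ ω, ξ k ω ∂μ) :
    ∀ᵐ ω ∂μ, (∃ l : ℝ, Tendsto (fun k => V k ω) atTop (nhds l)) ∧
      Summable (fun k => ζ k ω) := by
  have hrec' : ∀ k, μ[V (k + 1) | ℱ k] ≤ᵐ[μ] V k + μ[ξ k | ℱ k] := fun k =>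
    condExp_le_add_condExp (ℱ.le k) (hadapt k).stronglyMeasurable (hVint k) (hξint k) <| by
      filter_upwards [hrec k, hζpos k] with ω h1 h2
      simp only [Pi.add_apply, Pi.zero_apply] at h1 h2 ⊢
      linarith
  have hstep : ∀ k, ∫ ω, V (k + 1) ω ∂μ + ∫ ω, ζ k ω ∂μ ≤
      ∫ ω, V k ω ∂μ + ∫ ω, ξ k ω ∂μ := fun k => by
    have h := integral_le_of_condExp_le (ℱ.le k) (((hVint k).sub (hζint k)).add (hξint k)) (hrec k)
    rw [integral_add' ((hVint k).sub (hζint k)) (hξint k), integral_sub' (hVint k) (hζint k)] at h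
    linarith
  have hζsum : Summable fun k => ∫ ω, ζ k ω ∂μ :=
    summable_of_succ_add_le (fun k => integral_nonneg_of_ae (hVpos k))
      (fun k => integral_nonneg_of_ae (hζpos k)) (fun k => integral_nonneg_of_ae (hξpos k))
      hsum hstep
  have hV := ae_exists_tendsto_of_condExp_le_add hVpos hadapt.stronglyAdapted hVint
    (fun k => condExp_nonneg (hξpos k)) (fun k => stronglyMeasurable_condExp)
    (fun k => integrable_condExp) hrec' (hsum.congr fun k => (integral_condExp (ℱ.le k)).symm)
  exact hV.and (ae_summable_of_summable_integral hζpos hζint hζsum)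
end
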